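/- If g ⊂ so(V) is a Lie subalgebra containing so(V₀) with g = so(V₀) ⊕ (V₀ ⊗ R₁) for a 1-dimensional subspace R₁ ⊂ V₁, then g preserves the orthogonal complement S of R₁ in V₁, and the induced homomorphism g → so(V₀ ⊕ S) is a Lie algebra isomorphism. -/

import Mathlib

/-!
Write `R₁ = ℝ r`. For a skew `f` vanishing on `S`, the vector `f r` lies in `V₀`, and
`f + (B r r)⁻¹ (f r ⊗ r)` kills `V₁ = R₁ ⊕ S`; hence `𝔤` is exactly the algebra of skew maps
vanishing on `S`, which trivially preserves `S`. The line `S = ℝ s` has a generator with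
`B s s = B r r`, and the reflection in `s - r` is an isometry exchanging `S` and `R₁`;
conjugation by it carries `𝔤` onto `so(V₀ ⊕ S)`.
-/

open Module

attribute [local instance 100] LieRing.ofAssociativeRing

/-- `f` is skew-adjoint with respect to `B`. -/
def IsSkew {V : Type*} [AddCommGroup V] [Module ℝ V]
    (B : LinearMap.BilinForm ℝ V) (f : Module.End ℝ V) : Prop :=
  ∀ x y : V, B (f x) y = - B x (f y)

/-- The copy of `so(W^⊥)` inside `so(V)`: skew endomorphisms vanishing on `W`. -/
def soTriv {V : Type*} [AddCommGroup V] [Module ℝ V]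
    (B : LinearMap.BilinForm ℝ V) (W : Submodule ℝ V) : Set (Module.End ℝ V) :=
  {f | IsSkew B f ∧ ∀ x ∈ W, f x = 0}

/-- The skew endomorphism `x ↦ B(v₀,x) v₁ - B(v₁,x) v₀` attached to `v₀ ⊗ v₁`. -/
noncomputable def tensorSkew {V : Type*} [AddCommGroup V] [Module ℝ V]
    (B : LinearMap.BilinForm ℝ V) (v₀ v₁ : V) : Module.End ℝ V :=
  (LinearMap.toSpanSingleton ℝ V v₁).comp (B v₀) - (LinearMap.toSpanSingleton ℝ V v₀).comp (B v₁)

/-- The Lie subalgebra `so(W^⊥) ⊂ so(V)` of skew endomorphisms vanishing on `W`. -/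
def soLie {V : Type*} [AddCommGroup V] [Module ℝ V]
    (B : LinearMap.BilinForm ℝ V) (W : Submodule ℝ V) :
    LieSubalgebra ℝ (Module.End ℝ V) where
  carrier := soTriv B W
  add_mem' := by
    rintro a b ⟨ha1, ha2⟩ ⟨hb1, hb2⟩
    refine ⟨fun x y => ?_, fun x hx => ?_⟩
    · simp [LinearMap.add_apply, map_add, ha1 x y, hb1 x y]; ring
    · simp [LinearMap.add_apply, ha2 x hx, hb2 x hx]
  zero_mem' := by
    refine ⟨fun x y => ?_, fun x hx => ?_⟩ <;> simp [IsSkew]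
  smul_mem' := by
    rintro c a ⟨ha1, ha2⟩
    refine ⟨fun x y => ?_, fun x hx => ?_⟩
    · simp [LinearMap.smul_apply, map_smul, ha1 x y]
    · simp [LinearMap.smul_apply, ha2 x hx]
  lie_mem' := by
    rintro a b ⟨ha1, ha2⟩ ⟨hb1, hb2⟩
    refine ⟨fun x y => ?_, fun x hx => ?_⟩
    · have h1 := ha1 (b x) y
      have h2 := hb1 (a x) y
      have h3 := hb1 x (a y)
      have h4 := ha1 x (b y)
      simp only [Ring.lie_def, LinearMap.sub_apply, Module.End.mul_apply, map_sub]
      rw [h1, h2, hb1, ha1]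
      ring
    · simp [Ring.lie_def, LinearMap.sub_apply, Module.End.mul_apply,
        ha2 x hx, hb2 x hx]

theorem Submodule.exists_ne_zero_eq_span_singleton_of_finrank_eq_one {K M : Type*} [DivisionRing K]
    [AddCommGroup M] [Module K M] {W : Submodule K M} (h : finrank K W = 1) :
    ∃ v ≠ 0, W = K ∙ v := by
  obtain ⟨v, hv, hv0⟩ := W.exists_mem_ne_zero_of_ne_bot (by rintro rfl; simp at h)
  exact ⟨v, hv0, eq_span_singleton_of_mem_of_finrank_eq_one h hv hv0⟩

section

variable {V : Type*} [AddCommGroup V] [Module ℝ V] {B : LinearMap.BilinForm ℝ V}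

theorem tensorSkew_apply (v w x : V) :
    tensorSkew B v w x = B v x • w - B w x • v := by
  simp [tensorSkew, LinearMap.toSpanSingleton_apply]

theorem tensorSkew_smul_left (t : ℝ) (v w : V) :
    tensorSkew B (t • v) w = t • tensorSkew B v w := by
  ext x
  simp only [tensorSkew_apply, map_smul, LinearMap.smul_apply, smul_eq_mul, smul_sub, smul_smul]
  module

theorem isSkew_tensorSkew (hB : B.IsSymm) (v w : V) : IsSkew B (tensorSkew B v w) := by
  intro x y
  simp only [tensorSkew_apply, map_sub, map_smul, LinearMap.sub_apply, LinearMap.smul_apply,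
    smul_eq_mul, hB.eq x w, hB.eq x v]
  ring

theorem IsSkew.apply_self (hB : B.IsSymm) {f : Module.End ℝ V} (hf : IsSkew B f) (x : V) :
    B (f x) x = 0 := by
  have := hf x x
  rw [hB.eq x] at this
  linarith

theorem soTriv_anti {W W' : Submodule ℝ V} (h : W ≤ W') : soTriv B W' ⊆ soTriv B W :=
  fun _ hf => ⟨hf.1, fun x hx => hf.2 x (h hx)⟩

theorem tensorSkew_mem_soLie (hB : B.IsSymm) {W : Submodule ℝ V} {v w : V}
    (hv : ∀ x ∈ W, B v x = 0) (hw : ∀ x ∈ W, B w x = 0) : tensorSkew B v w ∈ soLie B W :=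
  ⟨isSkew_tensorSkew hB v w, fun x hx => by simp [tensorSkew_apply, hv x hx, hw x hx]⟩

section Decomposition

variable {r : V} {S : Submodule ℝ V}

theorem apply_mem_orthogonal_sup (hB : B.IsSymm) {f : Module.End ℝ V} (hf : f ∈ soLie B S) :
    f r ∈ B.orthogonal ((ℝ ∙ r) ⊔ S) := by
  intro n hn
  obtain ⟨_, ha, s, hs, rfl⟩ := Submodule.mem_sup.1 hn
  obtain ⟨t, rfl⟩ := Submodule.mem_span_singleton.1 ha
  have hr : B r (f r) = 0 := by rw [hB.eq]; exact hf.1.apply_self hB r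
  have hs : B s (f r) = 0 := by simpa [hf.2 s hs] using hf.1 s r
  simp [hr, hs]

theorem add_tensorSkew_mem_soTriv (hB : B.IsSymm) (hr : B r r ≠ 0)
    (hS : S ≤ B.orthogonal (ℝ ∙ r)) {f : Module.End ℝ V} (hf : f ∈ soLie B S) :
    f + (B r r)⁻¹ • tensorSkew B (f r) r ∈ soTriv B ((ℝ ∙ r) ⊔ S) := by
  have hker : (ℝ ∙ r) ⊔ S ≤ LinearMap.ker (f + (B r r)⁻¹ • tensorSkew B (f r) r) := by
    refine sup_le ((Submodule.span_singleton_le_iff_mem _ _).2 ?_) fun s hs => ?_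
    · simp [tensorSkew_apply, hf.1.apply_self hB, hr]
    · have hfr : B (f r) s = 0 := by rw [hf.1, hf.2 s hs, map_zero, neg_zero]
      simp [tensorSkew_apply, hf.2 s hs, hfr, hS hs r (Submodule.mem_span_singleton_self r)]
  -- the skew endomorphisms form `soLie B ⊥`
  exact ⟨((soLie B ⊥).add_mem ⟨hf.1, by simp⟩ ((soLie B ⊥).smul_mem _
    (tensorSkew_mem_soLie hB (by simp) (by simp)))).1, fun x hx => hker hx⟩

theorem soLie_toSubmodule_eq_span_sup_span (hB : B.IsSymm) (hr : B r r ≠ 0)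
    (hS : S ≤ B.orthogonal (ℝ ∙ r)) :
    (soLie B S).toSubmodule = Submodule.span ℝ (soTriv B ((ℝ ∙ r) ⊔ S)) ⊔
      Submodule.span ℝ {f | ∃ v₀ ∈ B.orthogonal ((ℝ ∙ r) ⊔ S), ∃ r' ∈ ℝ ∙ r,
        f = tensorSkew B v₀ r'} := by
  apply le_antisymm
  · intro f hf
    have hsum : f = (f + (B r r)⁻¹ • tensorSkew B (f r) r) + tensorSkew B (-(B r r)⁻¹ • f r) r := by
      rw [tensorSkew_smul_left, neg_smul]; abel
    rw [hsum]
    exact Submodule.add_mem_sup (Submodule.subset_span (add_tensorSkew_mem_soTriv hB hr hS hf))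
      (Submodule.subset_span ⟨_, Submodule.smul_mem _ _ (apply_mem_orthogonal_sup hB hf), r,
        Submodule.mem_span_singleton_self r, rfl⟩)
  · refine sup_le (Submodule.span_le.2 (soTriv_anti le_sup_right)) (Submodule.span_le.2 ?_)
    rintro _ ⟨v₀, hv₀, r', hr', rfl⟩
    exact tensorSkew_mem_soLie hB
      (fun x hx => by rw [hB.eq]; exact hv₀ x (Submodule.mem_sup_right hx))
      (fun x hx => hS hx r' hr')

end Decomposition

section Isometry

variable {e : V ≃ₗ[ℝ] V}

theorem isSkew_conj (he : ∀ x y, B (e x) (e y) = B x y) {f : Module.End ℝ V} (hf : IsSkew B f) :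
    IsSkew B (e.conj f) := by
  intro x y
  simp only [LinearEquiv.conj_apply, LinearMap.comp_apply, LinearEquiv.coe_coe]
  calc B (e (f (e.symm x))) y = B (e (f (e.symm x))) (e (e.symm y)) := by rw [e.apply_symm_apply]
    _ = - B (e.symm x) (f (e.symm y)) := by rw [he, hf]
    _ = - B x (e (f (e.symm y))) := by rw [← he, e.apply_symm_apply]

theorem conj_mem_soLie_map (he : ∀ x y, B (e x) (e y) = B x y) {W : Submodule ℝ V}
    {f : Module.End ℝ V} (hf : f ∈ soLie B W) : e.conj f ∈ soLie B (W.map (e : V →ₗ[ℝ] V)) := by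
  refine ⟨isSkew_conj he hf.1, ?_⟩
  rintro _ ⟨w, hw, rfl⟩
  simp [LinearEquiv.conj_apply, hf.2 w hw]

theorem soLie_map_lieConj (he : ∀ x y, B (e x) (e y) = B x y) (W : Submodule ℝ V) :
    (soLie B W).map e.lieConj.toLieHom = soLie B (W.map (e : V →ₗ[ℝ] V)) := by
  refine le_antisymm ?_ fun f hf => ⟨e.symm.conj f, ?_, by simp⟩
  · rintro _ ⟨f, hf, rfl⟩
    exact conj_mem_soLie_map he hf
  · have he' : ∀ x y, B (e.symm x) (e.symm y) = B x y := fun x y => by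
      rw [← he, e.apply_symm_apply, e.apply_symm_apply]
    simpa [(Submodule.map_symm_eq_iff e).2 rfl] using conj_mem_soLie_map he' hf

end Isometry

section Reflection

variable {u : V}

theorem two_div_smul_apply_self (hu : B u u ≠ 0) : ((2 / B u u) • B u) u = 2 := by
  simp [hu]

theorem reflection_isometry (hB : B.IsSymm) (hu : B u u ≠ 0) (x y : V) :
    B (Module.reflection (two_div_smul_apply_self hu) x)
      (Module.reflection (two_div_smul_apply_self hu) y) = B x y := by
  simp only [Module.reflection_apply, map_sub, map_smul, LinearMap.sub_apply, LinearMap.smul_apply,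
    smul_eq_mul, hB.eq x u]
  field_simp
  ring

theorem reflection_sub_apply_left (hB : B.IsSymm) {r s : V} (hss : B s s = B r r)
    (hu : B (s - r) (s - r) ≠ 0) : Module.reflection (two_div_smul_apply_self hu) s = r := by
  have hQ : B (s - r) (s - r) = 2 * B (s - r) s := by
    simp only [map_sub, LinearMap.sub_apply, hss, hB.eq s r]
    ring
  have hcoef : 2 / B (s - r) (s - r) * B (s - r) s = 1 := by
    rw [hQ] at hu ⊢
    have := right_ne_zero_of_mul hu
    field_simp
  rw [Module.reflection_apply, LinearMap.smul_apply, smul_eq_mul, hcoef, one_smul]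
  abel

theorem exists_isometry_map_span_singleton (hB : B.IsSymm) {r s : V} (hrs : B r s = 0)
    (hr : 0 < B r r) (hs : 0 < B s s) :
    ∃ e : V ≃ₗ[ℝ] V, (∀ x y, B (e x) (e y) = B x y) ∧ (ℝ ∙ s).map (e : V →ₗ[ℝ] V) = ℝ ∙ r := by
  set c := √(B r r / B s s)
  have hc : 0 < c := Real.sqrt_pos.2 (div_pos hr hs)
  have hcs : B (c • s) (c • s) = B r r := by
    simp only [map_smul, LinearMap.smul_apply, smul_eq_mul, ← mul_assoc,
      Real.mul_self_sqrt (div_pos hr hs).le, c]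
    field_simp
  have hu : B (c • s - r) (c • s - r) ≠ 0 := by
    have hsr : B s r = 0 := by rw [hB.eq]; exact hrs
    rw [map_sub, map_sub, LinearMap.sub_apply, LinearMap.sub_apply, hcs]
    simp [hrs, hsr, hr.ne']
  refine ⟨Module.reflection (two_div_smul_apply_self hu), reflection_isometry hB hu, ?_⟩
  rw [← Submodule.span_singleton_smul_eq hc.ne'.isUnit s, Submodule.map_span, Set.image_singleton,
    LinearEquiv.coe_coe, reflection_sub_apply_left hB hcs hu]

end Reflection

section Plane

variable {r : V} {V₁ : Submodule ℝ V}

theorem span_singleton_sup_orthogonal_inf (hr : B r r ≠ 0) (hrV₁ : r ∈ V₁) :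
    (ℝ ∙ r) ⊔ B.orthogonal (ℝ ∙ r) ⊓ V₁ = V₁ := by
  rw [← sup_inf_assoc_of_le _ ((Submodule.span_singleton_le_iff_mem _ _).2 hrV₁),
    (LinearMap.BilinForm.isCompl_span_singleton_orthogonal hr).sup_eq_top, top_inf_eq]

theorem finrank_orthogonal_inf_add_one [FiniteDimensional ℝ V₁] (hr : B r r ≠ 0) (hrV₁ : r ∈ V₁) :
    finrank ℝ ↥(B.orthogonal (ℝ ∙ r) ⊓ V₁) + 1 = finrank ℝ V₁ := by
  have hdisj : (ℝ ∙ r) ⊓ (B.orthogonal (ℝ ∙ r) ⊓ V₁) = ⊥ :=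
    eq_bot_mono (inf_le_inf_left _ inf_le_left)
      (LinearMap.BilinForm.isCompl_span_singleton_orthogonal hr).inf_eq_bot
  have := Submodule.finrank_sup_add_finrank_inf_eq (ℝ ∙ r) (B.orthogonal (ℝ ∙ r) ⊓ V₁)
  rw [span_singleton_sup_orthogonal_inf hr hrV₁, hdisj, finrank_bot,
    finrank_span_singleton (fun h => hr (by simp [h]))] at this
  omega

end Plane

end

theorem soV0_plus_line_tensor_isomorphic_to_soV2_general
    {V : Type*} [AddCommGroup V] [Module ℝ V]
    (B : LinearMap.BilinForm ℝ V) (hsymm : B.IsSymm)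
    (V₁ : Submodule ℝ V) (hdim : Module.finrank ℝ V₁ = 2)
    (hpos : ∀ w ∈ V₁, w ≠ 0 → 0 < B w w)
    (V₀ : Submodule ℝ V) (hV₀ : V₀ = B.orthogonal V₁)
    (R₁ : Submodule ℝ V) (hR₁V₁ : R₁ ≤ V₁) (hR₁ : Module.finrank ℝ R₁ = 1)
    (S : Submodule ℝ V) (hS : S = B.orthogonal R₁ ⊓ V₁)
    (g : LieSubalgebra ℝ (Module.End ℝ V))
    -- `𝔤 = so(V₀) ⊕ (V₀ ⊗ R₁)` :
    (hg : g.toSubmodule = Submodule.span ℝ (soTriv B V₁) ⊔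
      Submodule.span ℝ {f | ∃ v₀ ∈ V₀, ∃ r ∈ R₁, f = tensorSkew B v₀ r}) :
    (∀ f ∈ g, ∀ s ∈ S, f s ∈ S) ∧
    Nonempty (g ≃ₗ⁅ℝ⁆ soLie B R₁) := by
  obtain ⟨r, hr0, rfl⟩ := R₁.exists_ne_zero_eq_span_singleton_of_finrank_eq_one hR₁
  have hrV₁ : r ∈ V₁ := hR₁V₁ (Submodule.mem_span_singleton_self r)
  have hrr : 0 < B r r := hpos r hrV₁ hr0
  have hSr : S ≤ B.orthogonal (ℝ ∙ r) := hS ▸ inf_le_left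
  have hV₁ : (ℝ ∙ r) ⊔ S = V₁ := hS ▸ span_singleton_sup_orthogonal_inf hrr.ne' hrV₁
  have : FiniteDimensional ℝ V₁ := Module.finite_of_finrank_eq_succ hdim
  obtain ⟨s, hs0, rfl⟩ := S.exists_ne_zero_eq_span_singleton_of_finrank_eq_one <| by
    have := finrank_orthogonal_inf_add_one hrr.ne' hrV₁
    rw [← hS, hdim] at this
    omega
  have hsV₁ : s ∈ V₁ := hV₁ ▸ Submodule.mem_sup_right (Submodule.mem_span_singleton_self s)
  obtain rfl : g = soLie B (ℝ ∙ s) := LieSubalgebra.toSubmodule_injective <| by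
    rw [hg, hV₀, ← hV₁, soLie_toSubmodule_eq_span_sup_span hsymm hrr.ne' hSr]
  refine ⟨fun f hf x hx => hf.2 x hx ▸ zero_mem _, ?_⟩
  obtain ⟨e, he, hse⟩ := exists_isometry_map_span_singleton hsymm
    (hSr (Submodule.mem_span_singleton_self s) r (Submodule.mem_span_singleton_self r)) hrr
    (hpos s hsV₁ hs0)
  exact ⟨e.lieConj.ofSubalgebras _ _ (hse ▸ soLie_map_lieConj he _)⟩

/-- if `𝔤 ⊂ so(V)` is a Lie subalgebra containing `so(V₀)` with
`𝔤 = so(V₀) ⊕ (V₀ ⊗ R₁)` for a line `R₁ ⊂ V₁`, then `𝔤` preserves the orthogonal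
complement `S` of `R₁` in `V₁`, and `𝔤` is isomorphic, as a Lie algebra, to
`so(V₀ ⊕ S)` (the subalgebra of `so(V)` acting trivially on `R₁`). -/
theorem soV0_plus_line_tensor_isomorphic_to_soV2
    {V : Type*} [AddCommGroup V] [Module ℝ V] [FiniteDimensional ℝ V]
    (B : LinearMap.BilinForm ℝ V) (hsymm : B.IsSymm) (hnd : B.Nondegenerate)
    (V₁ : Submodule ℝ V) (hdim : Module.finrank ℝ V₁ = 2)
    (hpos : ∀ w ∈ V₁, w ≠ 0 → 0 < B w w)
    (V₀ : Submodule ℝ V) (hV₀ : V₀ = B.orthogonal V₁)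
    (R₁ : Submodule ℝ V) (hR₁V₁ : R₁ ≤ V₁) (hR₁ : Module.finrank ℝ R₁ = 1)
    (S : Submodule ℝ V) (hS : S = B.orthogonal R₁ ⊓ V₁)
    (g : LieSubalgebra ℝ (Module.End ℝ V))
    -- `𝔤 = so(V₀) ⊕ (V₀ ⊗ R₁)` :
    (hg : g.toSubmodule = Submodule.span ℝ (soTriv B V₁) ⊔
      Submodule.span ℝ {f | ∃ v₀ ∈ V₀, ∃ r ∈ R₁, f = tensorSkew B v₀ r}) :
    (∀ f ∈ g, ∀ s ∈ S, f s ∈ S) ∧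
    Nonempty (g ≃ₗ⁅ℝ⁆ soLie B R₁) :=
  soV0_plus_line_tensor_isomorphic_to_soV2_general B hsymm V₁ hdim hpos V₀ hV₀ R₁ hR₁V₁ hR₁ S hS g
    hg
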